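/- arXiv:2001.07213 — 3 statements merged into one kernel-verified Lean document; each statement's English description precedes it below -/
import Mathlib

section
/- Let D be a positive fundamental discriminant with D ≡ 0 (mod 4), and set d = D/4. Then there exists exactly one squarefree integer a > 1 such that a divides D and the equation x² − d·y² = a is solvable in integers x and y. -/
/-!
Let `ε = X + Y√d` be the fundamental solution of `X² - dY² = 1`. Writing `1 + ε = g (x + y√d)` with
`g = gcd (X + 1, Y)`, the norm identity `N(1 + ε) = 2 (X + 1)` gives `g² a = 2 (X + 1)` for
`a = x² - dy²`. Hence `a ∣ 2x`, which together with `gcd (x, y) = 1` and `d` squarefree forces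
`a` to be squarefree and to divide `2d`; and `a = 1` would make `x + y√d` a solution smaller than `ε`.

Conversely, if `α = x + y√d` has norm `a`, with `a` squarefree and dividing `2d`, then `a` divides
both coordinates of `α²`, so `α² = a εᵏ`. Here `k` is odd, for otherwise `α ε^(-k/2)` would be a
square root of `a` in `ℤ[√d]`. For two such `a, b` the product `αβ` satisfies
`(αβ)² = ab ε^(k + l)` with `k + l` even, so `ab` is a square and `a = b`.
-/

open Pell

namespace Int

theorem not_isSquare_of_emod_four {n : ℤ} (h : n % 4 = 2 ∨ n % 4 = 3) : ¬IsSquare n := by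
  rintro ⟨r, rfl⟩
  have hsq : ∀ s : ZMod 4, s * s ≠ 2 ∧ s * s ≠ 3 := by decide
  have hr : ((r * r % 4 : ℤ) : ZMod 4) = (r : ZMod 4) * r := by
    rw [← Int.cast_mul]; exact ZMod.intCast_mod _ 4
  rcases h with h | h <;> rw [h] at hr
  · exact (hsq r).1 (by exact_mod_cast hr.symm)
  · exact (hsq r).2 (by exact_mod_cast hr.symm)

theorem eq_of_squarefree_of_isSquare_mul {a b : ℤ} (ha : Squarefree a) (hb : Squarefree b)
    (h : IsSquare (a * b)) : a = b := by
  obtain ⟨r, hr⟩ := h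
  obtain ⟨t, rfl⟩ : a ∣ r := (ha.dvd_pow_iff_dvd two_ne_zero).mp ⟨b, by rw [sq, ← hr]⟩
  have hb' : b = a * (t * t) := mul_left_cancel₀ ha.ne_zero (by rw [hr]; ring)
  rw [hb', Int.isUnit_mul_self (hb t ⟨a, by rw [hb']; ring⟩), mul_one]

theorem squarefree_and_dvd_two_mul_of_sq_sub_mul_sq_dvd_two_mul {d x y : ℤ} (hd : Squarefree d)
    (hxy : IsCoprime x y) (h : x ^ 2 - d * y ^ 2 ∣ 2 * x) :
    Squarefree (x ^ 2 - d * y ^ 2) ∧ x ^ 2 - d * y ^ 2 ∣ 2 * d := by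
  constructor
  · intro z hz
    have hzx : z ∣ x :=
      Int.prime_two.squarefree.dvd_of_squarefree_of_mul_dvd_mul_right (hz.trans h)
    have hzy : z ∣ y ^ 2 := by
      refine hd.dvd_of_squarefree_of_mul_dvd_mul_right ?_
      rw [show d * y ^ 2 = x * x - (x ^ 2 - d * y ^ 2) by ring]
      exact dvd_sub (mul_dvd_mul hzx hzx) hz
    exact hxy.pow_right.isUnit_of_dvd' hzx hzy
  · have hcop : IsCoprime (x ^ 2 - d * y ^ 2) y := by
      have := (hxy.pow_left (m := 2)).add_mul_left_left (-(d * y))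
      rwa [show x ^ 2 + y * -(d * y) = x ^ 2 - d * y ^ 2 by ring] at this
    refine (hcop.pow_right (n := 2)).dvd_of_dvd_mul_right ?_
    rw [show 2 * d * y ^ 2 = 2 * x * x - 2 * (x ^ 2 - d * y ^ 2) by ring]
    exact dvd_sub (h.mul_right x) (dvd_mul_left _ _)

end Int

variable {d : ℤ}

theorem Zsqrtd.isSquare_of_mul_self_eq {γ : ℤ√d} {n : ℤ} (hd : d ≠ 0) (h : γ * γ = n)
    (hn : γ.norm = n) : IsSquare n := by
  have hre : γ.re * γ.re + d * γ.im * γ.im = n := by simpa using congrArg Zsqrtd.re h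
  rw [Zsqrtd.norm_def] at hn
  have him : γ.im = 0 := by
    have : d * (γ.im * γ.im) = 0 := by linarith
    simpa [hd] using this
  exact ⟨γ.re, by rw [him] at hre; linarith⟩

namespace Pell.Solution₁

@[simp]
theorem coe_mul (a b : Solution₁ d) : ((a * b : Solution₁ d) : ℤ√d) = a * b := rfl

@[simp]
theorem coe_one : ((1 : Solution₁ d) : ℤ√d) = 1 := rfl

theorem norm_coe (a : Solution₁ d) : (a : ℤ√d).norm = 1 :=
  Zsqrtd.norm_eq_one_iff_mem_unitary.mpr a.property

theorem isSquare_of_mul_self_eq_mul_zpow {ε : Solution₁ d} {α : ℤ√d} {n k : ℤ}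
    (hd : d ≠ 0) (h : α * α = n * (ε ^ k : Solution₁ d)) (hk : Even k) (hn : α.norm = n) :
    IsSquare n := by
  obtain ⟨m, rfl⟩ := hk
  set δ : ℤ√d := ((ε ^ (-m) : Solution₁ d) : ℤ√d)
  have hδ : (ε ^ (m + m) : Solution₁ d) * δ * δ = 1 := by
    rw [← coe_mul, ← coe_mul, ← zpow_add, ← zpow_add, add_neg_cancel_right, add_neg_cancel,
      zpow_zero, coe_one]
  refine Zsqrtd.isSquare_of_mul_self_eq hd (γ := α * δ) ?_ ?_
  · calc α * δ * (α * δ) = n * ((ε ^ (m + m) : Solution₁ d) * δ * δ) := by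
          linear_combination δ * δ * h
      _ = n := by rw [hδ, mul_one]
  · rw [Zsqrtd.norm_mul, hn, norm_coe, mul_one]

end Pell.Solution₁

namespace Pell.IsFundamental

variable {ε : Solution₁ d}

theorem exists_odd_mul_self_eq_mul_zpow (hε : IsFundamental ε) {a x y : ℤ} (ha : Squarefree a)
    (ha₁ : 1 < a) (had : a ∣ 2 * d) (h : x ^ 2 - d * y ^ 2 = a) :
    ∃ k : ℤ, Odd k ∧ (⟨x, y⟩ : ℤ√d) * ⟨x, y⟩ = a * (ε ^ k : Solution₁ d) := by
  have hsum : x ^ 2 + d * y ^ 2 = a + 2 * d * y ^ 2 := by linear_combination h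
  obtain ⟨u, hu⟩ : a ∣ x ^ 2 + d * y ^ 2 := hsum ▸ dvd_add dvd_rfl (had.mul_right _)
  obtain ⟨v, hv⟩ : a ∣ 2 * x * y := by
    refine (ha.dvd_pow_iff_dvd two_ne_zero).mp ?_
    rw [show (2 * x * y) ^ 2 = a * (4 * y ^ 2) + 2 * d * (2 * y ^ 4) by rw [← h]; ring]
    exact dvd_add (dvd_mul_right _ _) (had.mul_right _)
  have hpell : u ^ 2 - d * v ^ 2 = 1 := by
    refine mul_left_cancel₀ (pow_ne_zero 2 (by omega : a ≠ 0)) ?_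
    linear_combination (-(x ^ 2 + d * y ^ 2) - a * u) * hu + (d * (2 * x * y + a * v)) * hv
      + (x ^ 2 - d * y ^ 2 + a) * h
  have hu₀ : 0 < u := by
    have : 0 < a * u := by rw [← hu, hsum]; nlinarith [hε.d_pos, sq_nonneg y]
    exact pos_of_mul_pos_right this (by omega)
  obtain ⟨k, hk⟩ : ∃ k : ℤ, ε ^ k = Solution₁.mk u v hpell := by
    obtain ⟨k, hk | hk⟩ := hε.eq_zpow_or_neg_zpow (Solution₁.mk u v hpell)
    · exact ⟨k, hk.symm⟩
    · have := Solution₁.x_zpow_pos hε.x_pos k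
      rw [← neg_neg (ε ^ k), ← hk, Solution₁.x_neg, Solution₁.x_mk] at this
      omega
  have hsq : (⟨x, y⟩ : ℤ√d) * ⟨x, y⟩ = a * (ε ^ k : Solution₁ d) := by
    rw [hk, Solution₁.coe_mk]
    ext <;> simp only [Zsqrtd.re_mul, Zsqrtd.im_mul, Zsqrtd.smul_val]
    · linear_combination hu
    · linear_combination hv
  refine ⟨k, Int.not_even_iff_odd.mp fun hk ↦ ?_, hsq⟩
  have hnorm : (⟨x, y⟩ : ℤ√d).norm = a := by rw [Zsqrtd.norm_def, ← h]; ring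
  have : a = 1 := Int.eq_of_squarefree_of_isSquare_mul ha squarefree_one
    (by simpa using Solution₁.isSquare_of_mul_self_eq_mul_zpow hε.d_pos.ne' hsq hk hnorm)
  omega

theorem eq_of_sq_sub_mul_sq_eq (hε : IsFundamental ε) {a b : ℤ} (ha : Squarefree a)
    (hb : Squarefree b) (ha₁ : 1 < a) (hb₁ : 1 < b) (had : a ∣ 2 * d) (hbd : b ∣ 2 * d)
    (hra : ∃ x y : ℤ, x ^ 2 - d * y ^ 2 = a) (hrb : ∃ x y : ℤ, x ^ 2 - d * y ^ 2 = b) :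
    a = b := by
  obtain ⟨x, y, hxy⟩ := hra
  obtain ⟨z, w, hzw⟩ := hrb
  obtain ⟨k, hk, hα⟩ := hε.exists_odd_mul_self_eq_mul_zpow ha ha₁ had hxy
  obtain ⟨l, hl, hβ⟩ := hε.exists_odd_mul_self_eq_mul_zpow hb hb₁ hbd hzw
  set α : ℤ√d := ⟨x, y⟩
  set β : ℤ√d := ⟨z, w⟩
  have hαβ : α * β * (α * β) = (a * b : ℤ) * (ε ^ (k + l) : Solution₁ d) := by
    rw [zpow_add, Solution₁.coe_mul]
    push_cast
    linear_combination (β * β) * hα + (a * (ε ^ k : Solution₁ d) : ℤ√d) * hβ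
  have hnorm : (α * β).norm = a * b := by
    rw [Zsqrtd.norm_mul, Zsqrtd.norm_def, Zsqrtd.norm_def, ← hxy, ← hzw]; ring
  exact Int.eq_of_squarefree_of_isSquare_mul ha hb
    (Solution₁.isSquare_of_mul_self_eq_mul_zpow hε.d_pos.ne' hαβ (hk.add_odd hl) hnorm)

theorem exists_squarefree_dvd_two_mul (hε : IsFundamental ε) (hd : Squarefree d) :
    ∃ a : ℤ, 1 < a ∧ Squarefree a ∧ a ∣ 2 * d ∧ ∃ x y : ℤ, x ^ 2 - d * y ^ 2 = a := by
  obtain ⟨g, x, y, hg, hgcd, hX, hY⟩ :=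
    Int.exists_gcd_one' (Int.gcd_pos_of_ne_zero_right (ε.x + 1) hε.2.1.ne')
  have hnorm : (g : ℤ) ^ 2 * (x ^ 2 - d * y ^ 2) = 2 * (ε.x + 1) := by
    linear_combination ε.prop - (ε.x + 1 + x * g) * hX + d * (ε.y + y * g) * hY
  have h2x : (g : ℤ) * (x ^ 2 - d * y ^ 2) = 2 * x := by
    refine mul_left_cancel₀ (by positivity : (g : ℤ) ≠ 0) ?_
    linear_combination hnorm + 2 * hX
  obtain ⟨hsf, hdvd⟩ := Int.squarefree_and_dvd_two_mul_of_sq_sub_mul_sq_dvd_two_mul hd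
    (Int.isCoprime_iff_gcd_eq_one.mpr hgcd) ⟨g, by rw [← h2x, mul_comm]⟩
  refine ⟨_, ?_, hsf, hdvd, x, y, rfl⟩
  have hpos : 0 < x ^ 2 - d * y ^ 2 :=
    pos_of_mul_pos_right (hnorm ▸ (by linarith [hε.1] : 0 < 2 * (ε.x + 1))) (by positivity)
  refine lt_of_le_of_ne hpos (fun h1 ↦ ?_)
  have hgx : (g : ℤ) = 2 * x := by simpa [← h1] using h2x
  have hy : y ≠ 0 := by rintro rfl; simp [hε.2.1.ne'] at hY
  have hx : 1 < x := by nlinarith [hε.d_pos, sq_pos_of_ne_zero hy]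
  have hεx := hε.x_le_x (a := Solution₁.mk x y h1.symm) (by rwa [Solution₁.x_mk])
  rw [Solution₁.x_mk] at hεx
  nlinarith

end Pell.IsFundamental

theorem stmt5_general (D : ℕ) (h4 : 4 ∣ D) (hsf : Squarefree (D / 4))
    (hmod : D / 4 % 4 = 2 ∨ D / 4 % 4 = 3) :
    ∃! a : ℕ, 1 < a ∧ Squarefree a ∧ a ∣ D ∧
      ∃ x y : ℤ, x ^ 2 - ((D / 4 : ℕ) : ℤ) * y ^ 2 = (a : ℤ) := by
  set d : ℕ := D / 4
  have hD : (D : ℤ) = 2 * (2 * d) := by omega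
  obtain ⟨ε, hε⟩ := IsFundamental.exists_of_not_isSquare (d := d) (by omega)
    (Int.not_isSquare_of_emod_four (by omega))
  obtain ⟨a, ha₁, ha, had, hrep⟩ :=
    hε.exists_squarefree_dvd_two_mul (Int.squarefree_natCast.mpr hsf)
  lift a to ℕ using (by omega)
  refine ⟨a, ⟨by omega, Int.squarefree_natCast.mp ha,
    Int.natCast_dvd_natCast.mp (hD ▸ had.mul_left 2), hrep⟩, ?_⟩
  rintro b ⟨hb₁, hb, hbD, hrepb⟩
  have hbd : (b : ℤ) ∣ 2 * d := by
    refine ((Int.squarefree_natCast.mpr hb).dvd_pow_iff_dvd two_ne_zero).mp ?_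
    rw [show (2 * (d : ℤ)) ^ 2 = D * d by rw [hD]; ring]
    exact (Int.natCast_dvd_natCast.mpr hbD).mul_right _
  exact_mod_cast hε.eq_of_sq_sub_mul_sq_eq (Int.squarefree_natCast.mpr hb) ha (by omega) ha₁
    hbd had hrepb hrep

/-- if `D` is a positive fundamental discriminant with `D ≡ 0 (mod 4)`
(i.e. `D = 4d` with `d` squarefree and `d ≡ 2` or `3 (mod 4)`), then there is exactly one
squarefree integer `a > 1` dividing `D` such that `x² - d·y² = a` is solvable over `ℤ`. -/
theorem stmt5 (D : ℕ) (hpos : 0 < D) (h4 : 4 ∣ D) (hsf : Squarefree (D / 4))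
    (hmod : D / 4 % 4 = 2 ∨ D / 4 % 4 = 3) :
    ∃! a : ℕ, 1 < a ∧ Squarefree a ∧ a ∣ D ∧
      ∃ x y : ℤ, x ^ 2 - ((D / 4 : ℕ) : ℤ) * y ^ 2 = (a : ℤ) :=
  stmt5_general D h4 hsf hmod
end

section
/- Let d and a be coprime positive squarefree integers with d·a > 1. Then the equation x² − d·a·y² = −a is solvable in integers x and y if and only if the equation x² − d·a·y² = d is solvable in integers x and y. -/
/-!
Both equations are equivalent to `d u² - a v² = 1`: in `x² - d a y² = -a` the squarefree `a`
divides `x²`, hence `x`, and cancelling `a` after writing `x = a v` leaves `d y² - a v² = 1`;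
symmetrically for `x² - d a y² = d` with `x = d u`.
-/

theorem Int.exists_sq_sub_mul_mul_sq_eq_mul_iff {m : ℤ} (hm : Squarefree m) (n c : ℤ) :
    (∃ x y : ℤ, x ^ 2 - m * n * y ^ 2 = m * c) ↔
      ∃ u v : ℤ, m * u ^ 2 - n * v ^ 2 = c := by
  have hm0 : m ≠ 0 := hm.ne_zero
  constructor
  · rintro ⟨x, y, h⟩
    have hmx : m ∣ x :=
      (hm.dvd_pow_iff_dvd two_ne_zero).mp ⟨n * y ^ 2 + c, by linear_combination h⟩
    obtain ⟨u, rfl⟩ := hmx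
    exact ⟨u, y, mul_left_cancel₀ hm0 (by linear_combination h)⟩
  · rintro ⟨u, v, h⟩
    exact ⟨m * u, v, by linear_combination m * h⟩

theorem stmt6_general (d a : ℕ) (hdsf : Squarefree d) (hasf : Squarefree a) :
    (∃ x y : ℤ, x ^ 2 - (d : ℤ) * (a : ℤ) * y ^ 2 = -(a : ℤ)) ↔
      (∃ x y : ℤ, x ^ 2 - (d : ℤ) * (a : ℤ) * y ^ 2 = (d : ℤ)) := by
  have hd : Squarefree (d : ℤ) := Int.squarefree_natCast.mpr hdsf
  have ha : Squarefree (a : ℤ) := Int.squarefree_natCast.mpr hasf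
  calc (∃ x y : ℤ, x ^ 2 - d * a * y ^ 2 = -a)
      ↔ ∃ x y : ℤ, x ^ 2 - a * d * y ^ 2 = a * -1 := by
        simp only [mul_comm (d : ℤ), mul_neg_one]
    _ ↔ ∃ v u : ℤ, a * v ^ 2 - d * u ^ 2 = -1 :=
        Int.exists_sq_sub_mul_mul_sq_eq_mul_iff ha _ _
    _ ↔ ∃ u v : ℤ, d * u ^ 2 - a * v ^ 2 = 1 := by
      rw [exists_comm]
      refine exists₂_congr fun u v => ?_
      constructor <;> intro h <;> linear_combination -h
    _ ↔ ∃ x y : ℤ, x ^ 2 - d * a * y ^ 2 = d * 1 :=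
        (Int.exists_sq_sub_mul_mul_sq_eq_mul_iff hd _ _).symm
    _ ↔ ∃ x y : ℤ, x ^ 2 - d * a * y ^ 2 = d := by simp only [mul_one]

/-- for coprime positive squarefree integers `d` and `a` with `d·a > 1`,
`x² - d·a·y² = -a` is solvable over `ℤ` iff `x² - d·a·y² = d` is solvable over `ℤ`. -/
theorem stmt6 (d a : ℕ) (hd : 0 < d) (ha : 0 < a) (hcop : Nat.Coprime d a)
    (hdsf : Squarefree d) (hasf : Squarefree a) (hgt : 1 < d * a) :
    (∃ x y : ℤ, x ^ 2 - (d : ℤ) * (a : ℤ) * y ^ 2 = -(a : ℤ)) ↔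
      (∃ x y : ℤ, x ^ 2 - (d : ℤ) * (a : ℤ) * y ^ 2 = (d : ℤ)) :=
  stmt6_general d a hdsf hasf
end

section
/- Let k ≥ 1, let U₀ be a k-dimensional 𝔽₂-vector subspace of 𝔽₂^{2k}, and let b ∈ 𝔽₂^{2k} with b ∉ U₀. Let W = U₀ + 𝔽₂·b be the (k+1)-dimensional subspace spanned by U₀ and b, and define the map μ from the set of all subsets of the coset b + U₀ to W by μ(S) = Σ_{s ∈ S} s. Then: (i) μ is surjective; (ii) every fiber of μ has cardinality 2^{2^k − k − 1}; (iii) the image under μ of the subsets of b + U₀ of odd cardinality is exactly the coset b + U₀. -/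
/-!
Identify a subset of the coset `C = b + U₀` with its indicator function `C → 𝔽₂`. Then `μ`
becomes the linear map `g ↦ ∑ c, g c • c`, whose image is the span of `C`, namely
`W = U₀ ⊔ 𝔽₂ b`, of dimension `k + 1`. Each fibre is a translate of its kernel, which by
rank–nullity has dimension `|C| - (k + 1) = 2^k - k - 1`. For the odd subsets: a sum of `n`
elements `b + uᵢ` equals `n • b` plus an element of `U₀`, and `n • b = b` for odd `n`.
-/

open Finset

section Coset

variable {R V : Type*} [Ring R] [AddCommGroup V] [Module R V] (U : Submodule R V) (b : V)

theorem Submodule.span_coset :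
    Submodule.span R {v | ∃ u ∈ U, v = b + u} = U ⊔ Submodule.span R {b} := by
  have hb : b ∈ {v | ∃ u ∈ U, v = b + u} := ⟨0, U.zero_mem, (add_zero b).symm⟩
  apply le_antisymm
  · rw [Submodule.span_le]
    rintro _ ⟨u, hu, rfl⟩
    exact add_comm u b ▸ Submodule.add_mem_sup hu (Submodule.mem_span_singleton_self b)
  · refine sup_le (fun u hu => ?_)
      ((Submodule.span_singleton_le_iff_mem _ _).mpr (Submodule.subset_span hb))
    have hbu : b + u ∈ Submodule.span R {v | ∃ u ∈ U, v = b + u} :=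
      Submodule.subset_span ⟨u, hu, rfl⟩
    simpa using Submodule.sub_mem _ hbu (Submodule.subset_span hb)

theorem Submodule.sum_sub_card_nsmul_mem {S : Finset V} (hS : ↑S ⊆ {v | ∃ u ∈ U, v = b + u}) :
    ∑ s ∈ S, s - #S • b ∈ U := by
  rw [← Finset.sum_const, ← Finset.sum_sub_distrib]
  refine U.sum_mem fun s hs => ?_
  obtain ⟨u, hu, rfl⟩ := hS hs
  simpa using hu

theorem Submodule.natCard_coset : Nat.card {v | ∃ u ∈ U, v = b + u} = Nat.card U := by
  have h : {v | ∃ u ∈ U, v = b + u} = (b + ·) '' U :=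
    Set.ext fun _ => exists_congr fun _ => and_congr_right fun _ => eq_comm
  rw [h, Nat.card_image_of_injective (add_right_injective b)]
  rfl

end Coset

def Set.finsetSubsetEquiv {β : Type*} (C : Set β) [DecidablePred (· ∈ C)] :
    {S : Finset β // ↑S ⊆ C} ≃ Finset C where
  toFun S := S.1.subtype (· ∈ C)
  invFun T := ⟨T.map (Function.Embedding.subtype _), Finset.map_subtype_subset T⟩
  left_inv S := Subtype.ext (Finset.subtype_map_of_mem S.2)
  right_inv T := Finset.map_injective (Function.Embedding.subtype _)
    (Finset.subtype_map_of_mem fun _ hx => Finset.map_subtype_subset T hx)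

section ZModTwo

variable {α V : Type*} [AddCommGroup V] [Module (ZMod 2) V]

variable (α) in
def finsetEquivZModTwo [Fintype α] [DecidableEq α] : Finset α ≃ (α → ZMod 2) where
  toFun T i := if i ∈ T then 1 else 0
  invFun g := {i | g i = 1}
  left_inv T := by ext; simp
  right_inv g := by
    funext i
    rcases (by decide : ∀ x : ZMod 2, x = 0 ∨ x = 1) (g i) with h | h <;> simp [h]

theorem Fintype.linearCombination_finsetEquivZModTwo [Fintype α] [DecidableEq α] (v : α → V)
    (T : Finset α) :
    Fintype.linearCombination (ZMod 2) v (finsetEquivZModTwo α T) = ∑ i ∈ T, v i := by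
  simp [Fintype.linearCombination_apply, finsetEquivZModTwo, ite_smul, Finset.sum_ite_mem]

theorem natCard_finset_sum_eq [Finite α] (v : α → V) {w : V}
    (hw : w ∈ Submodule.span (ZMod 2) (Set.range v)) :
    Nat.card {T : Finset α // ∑ i ∈ T, v i = w} =
      2 ^ (Nat.card α - Module.finrank (ZMod 2) (Submodule.span (ZMod 2) (Set.range v))) := by
  classical
  have := Fintype.ofFinite α
  set L := Fintype.linearCombination (ZMod 2) v
  obtain ⟨g, rfl⟩ : w ∈ LinearMap.range L := by rwa [Fintype.range_linearCombination]
  have hfiber : {T : Finset α // ∑ i ∈ T, v i = L g} ≃ LinearMap.ker L :=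
    (Equiv.subtypeEquiv (finsetEquivZModTwo α) fun T => by
      change _ ↔ L (finsetEquivZModTwo α T) = L g
      rw [Fintype.linearCombination_finsetEquivZModTwo]).trans
      ((L.toAddMonoidHom.fiberEquivKer g).trans
        (Equiv.setCongr (by rw [← LinearMap.ker_toAddSubgroup]; rfl)))
  have hrank := L.finrank_range_add_finrank_ker
  rw [Fintype.range_linearCombination, Module.finrank_fintype_fun_eq_card] at hrank
  rw [Nat.card_congr hfiber, Module.natCard_eq_pow_finrank (K := ZMod 2), Nat.card_zmod,
    Nat.card_eq_fintype_card]
  congr 1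
  omega

theorem natCard_subset_sum_eq {C : Set V} [Finite C] {w : V}
    (hw : w ∈ Submodule.span (ZMod 2) C) :
    Nat.card {S : Finset V // ↑S ⊆ C ∧ ∑ s ∈ S, s = w} =
      2 ^ (Nat.card C - Module.finrank (ZMod 2) (Submodule.span (ZMod 2) C)) := by
  classical
  have h := natCard_finset_sum_eq ((↑) : C → V) (by rwa [Subtype.range_coe])
  rw [Subtype.range_coe] at h
  rw [← h]
  refine Nat.card_congr ((Equiv.subtypeSubtypeEquivSubtypeInter _ _).symm.trans
    (Equiv.subtypeEquiv (Set.finsetSubsetEquiv C) fun S => ?_))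
  change _ ↔ ∑ c ∈ S.1.subtype (· ∈ C), (c : V) = w
  rw [Finset.sum_subtype_of_mem (fun v => v) S.2]

theorem Submodule.sum_mem_coset_of_odd_card {U : Submodule (ZMod 2) V} {b : V} {S : Finset V}
    (hS : ↑S ⊆ {v | ∃ u ∈ U, v = b + u}) (hodd : Odd #S) :
    ∑ s ∈ S, s ∈ {v | ∃ u ∈ U, v = b + u} := by
  have hb : #S • b = b := by
    rw [← Nat.cast_smul_eq_nsmul (ZMod 2), ZMod.natCast_eq_one_iff_odd.mpr hodd, one_smul]
  exact ⟨_, U.sum_sub_card_nsmul_mem b hS, by rw [hb, add_sub_cancel]⟩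

end ZModTwo

theorem stmt13_general (k : ℕ)
    (U₀ : Submodule (ZMod 2) (Fin (2 * k) → ZMod 2))
    (hU₀ : Module.finrank (ZMod 2) U₀ = k)
    (b : Fin (2 * k) → ZMod 2) (hb : b ∉ U₀)
    (W : Submodule (ZMod 2) (Fin (2 * k) → ZMod 2))
    (hW : W = U₀ ⊔ Submodule.span (ZMod 2) {b})
    (C : Set (Fin (2 * k) → ZMod 2)) (hC : C = {v | ∃ u ∈ U₀, v = b + u}) :
    (∀ S : Finset (Fin (2 * k) → ZMod 2), ↑S ⊆ C → ∑ s ∈ S, s ∈ W) ∧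
    (∀ w : Fin (2 * k) → ZMod 2, w ∈ W →
      ∃ S : Finset (Fin (2 * k) → ZMod 2), ↑S ⊆ C ∧ ∑ s ∈ S, s = w) ∧
    (∀ w : Fin (2 * k) → ZMod 2, w ∈ W →
      Nat.card {S : Finset (Fin (2 * k) → ZMod 2) // ↑S ⊆ C ∧ ∑ s ∈ S, s = w} =
        2 ^ (2 ^ k - k - 1)) ∧
    (∀ v : Fin (2 * k) → ZMod 2,
      (∃ S : Finset (Fin (2 * k) → ZMod 2), ↑S ⊆ C ∧ Odd S.card ∧ ∑ s ∈ S, s = v) ↔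
        v ∈ C) := by
  subst hC
  have hspan : Submodule.span (ZMod 2) {v | ∃ u ∈ U₀, v = b + u} = W :=
    hW ▸ Submodule.span_coset U₀ b
  have hcardC : Nat.card {v | ∃ u ∈ U₀, v = b + u} = 2 ^ k := by
    rw [Submodule.natCard_coset, Module.natCard_eq_pow_finrank (K := ZMod 2), hU₀, Nat.card_zmod]
  have hrankW : Module.finrank (ZMod 2) W = k + 1 := by
    rw [hW, Submodule.finrank_sup_span_singleton hb, hU₀]
  have hfiber : ∀ w ∈ W, Nat.card {S : Finset (Fin (2 * k) → ZMod 2) //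
      ↑S ⊆ {v | ∃ u ∈ U₀, v = b + u} ∧ ∑ s ∈ S, s = w} = 2 ^ (2 ^ k - k - 1) := by
    intro w hw
    rw [natCard_subset_sum_eq (hspan ▸ hw), hcardC, hspan, hrankW, Nat.sub_sub]
  refine ⟨fun S hS => W.sum_mem fun s hs => hspan ▸ Submodule.subset_span (hS hs),
    fun w hw => ?_, hfiber, fun v => ⟨?_, fun hv => ⟨{v}, by simpa using hv, by simp, by simp⟩⟩⟩
  · obtain ⟨⟨S, hS⟩, -⟩ := Nat.card_ne_zero.mp (by rw [hfiber w hw]; positivity)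
    exact ⟨S, hS⟩
  · rintro ⟨S, hS, hodd, rfl⟩
    exact Submodule.sum_mem_coset_of_odd_card hS hodd

/-- let `U₀` be a `k`-dimensional subspace of `𝔽₂^{2k}`, `b ∉ U₀`,
`W = U₀ + 𝔽₂·b`, `C = b + U₀` the coset, and `μ(S) = Σ_{s ∈ S} s` for `S ⊆ C`. Then
`μ` maps subsets of `C` into `W`, and: (i) `μ` is surjective onto `W`; (ii) each fiber of
`μ` has cardinality `2^{2^k - k - 1}`; (iii) the image under `μ` of the subsets of `C` of
odd cardinality is exactly `C`. -/
theorem stmt13 (k : ℕ) (hk : 1 ≤ k)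
    (U₀ : Submodule (ZMod 2) (Fin (2 * k) → ZMod 2))
    (hU₀ : Module.finrank (ZMod 2) U₀ = k)
    (b : Fin (2 * k) → ZMod 2) (hb : b ∉ U₀)
    (W : Submodule (ZMod 2) (Fin (2 * k) → ZMod 2))
    (hW : W = U₀ ⊔ Submodule.span (ZMod 2) {b})
    (C : Set (Fin (2 * k) → ZMod 2)) (hC : C = {v | ∃ u ∈ U₀, v = b + u}) :
    (∀ S : Finset (Fin (2 * k) → ZMod 2), ↑S ⊆ C → ∑ s ∈ S, s ∈ W) ∧
    (∀ w : Fin (2 * k) → ZMod 2, w ∈ W →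
      ∃ S : Finset (Fin (2 * k) → ZMod 2), ↑S ⊆ C ∧ ∑ s ∈ S, s = w) ∧
    (∀ w : Fin (2 * k) → ZMod 2, w ∈ W →
      Nat.card {S : Finset (Fin (2 * k) → ZMod 2) // ↑S ⊆ C ∧ ∑ s ∈ S, s = w} =
        2 ^ (2 ^ k - k - 1)) ∧
    (∀ v : Fin (2 * k) → ZMod 2,
      (∃ S : Finset (Fin (2 * k) → ZMod 2), ↑S ⊆ C ∧ Odd S.card ∧ ∑ s ∈ S, s = v) ↔
        v ∈ C) :=
  stmt13_general k U₀ hU₀ b hb W hW C hC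
end
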